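/- Let f be holomorphic on Ω(c,C)^m × D_R^n with mixed asymptotic expansion a. Then for every j ∈ {1,…,n} the partial derivative ∂f/∂yⱼ (in the j-th disc variable) is holomorphic on Ω(c,C)^m × D_R^n and has mixed asymptotic expansion (α,β) ↦ (βⱼ + 1)·a(α, β + eⱼ), where eⱼ ∈ ℕ^n is the j-th unit vector. -/

import Mathlib

noncomputable section
open scoped Classical

/-- Logarithmic model of a standard quadratic domain:
`Ω(c,C) = {z : Re z < log c - C·√|Im z|}`. -/
def SQD (c C : ℝ) : Set ℂ := {z : ℂ | z.re < Real.log c - C * Real.sqrt |z.im|}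

/-- The cartesian power `Ω(c,C)^m`. -/
def QDom (c C : ℝ) (m : ℕ) : Set (Fin m → ℂ) := {z | ∀ i, z i ∈ SQD c C}

/-- Open disc `D_R` of radius `R` centred at `0`. -/
def Disc (R : ℝ) : Set ℂ := {w : ℂ | ‖w‖ < R}

/-- Polydisc `D_R^n`. -/
def PDisc (R : ℝ) (n : ℕ) : Set (Fin n → ℂ) := {y | ∀ j, y j ∈ Disc R}

/-- The exponential monomial `exp⟨α,z⟩`. -/
def expMono {m : ℕ} (α : Fin m → ℝ) (z : Fin m → ℂ) : ℂ :=
  Complex.exp (∑ i, (α i : ℂ) * z i)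

/-- Euclidean norm of `E(z) = (exp (Re z₁), …, exp (Re z_m))`. -/
def eNorm {m : ℕ} (z : Fin m → ℂ) : ℝ :=
  Real.sqrt (∑ i, Real.exp ((z i).re) ^ 2)

/-- A generalized power series with natural support: nonnegative exponents, and in each
coordinate the set of exponents below any bound is finite. -/
def NaturalSeries {m : ℕ} (a : (Fin m → ℝ) → ℂ) : Prop :=
  (∀ α, a α ≠ 0 → ∀ i, 0 ≤ α i) ∧
  ∀ i : Fin m, ∀ R : ℝ, 0 < R → {r : ℝ | (∃ α, a α ≠ 0 ∧ α i = r) ∧ r ≤ R}.Finite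

/-- `f` has asymptotic expansion `a` on `Ω(c,C)^m`: for every `ν > 0` there is a smaller
standard quadratic domain on which `f` minus the partial sum of weight `≤ ν` is
`o(‖E(z)‖^ν)` as `‖E(z)‖ → 0`. -/
def HasAsymExp {m : ℕ} (c C : ℝ) (f : (Fin m → ℂ) → ℂ) (a : (Fin m → ℝ) → ℂ) : Prop :=
  NaturalSeries a ∧
  ∀ ν : ℝ, 0 < ν → ∃ c' C' : ℝ, 0 < c' ∧ 0 < C' ∧ SQD c' C' ⊆ SQD c C ∧
    ∃ F : Finset (Fin m → ℝ),
      (∀ α, α ∈ F ↔ a α ≠ 0 ∧ ∑ i, α i ≤ ν) ∧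
      ∀ ε : ℝ, 0 < ε → ∃ δ : ℝ, 0 < δ ∧
        ∀ z ∈ QDom c' C' m, eNorm z < δ →
          ‖f z - ∑ α ∈ F, a α * expMono α z‖ ≤ ε * eNorm z ^ ν

/-- Euclidean norm of `(E(z),y) = (exp Re z₁, …, exp Re z_m, |y₁|, …, |y_n|)`. -/
def mixedNorm {m n : ℕ} (z : Fin m → ℂ) (y : Fin n → ℂ) : ℝ :=
  Real.sqrt (∑ i, Real.exp ((z i).re) ^ 2 + ∑ j, ‖y j‖ ^ 2)

/-- A mixed series: coefficient function with natural support in the first `m`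
(real-exponent) coordinates. -/
def MixedNatural {m n : ℕ} (a : (Fin m → ℝ) → (Fin n → ℕ) → ℂ) : Prop :=
  (∀ α β, a α β ≠ 0 → ∀ i, 0 ≤ α i) ∧
  ∀ i : Fin m, ∀ R : ℝ, 0 < R →
    {r : ℝ | (∃ α β, a α β ≠ 0 ∧ α i = r) ∧ r ≤ R}.Finite

/-- `f` has mixed asymptotic expansion `a` on `Ω(c,C)^m × D_R^n`. -/
def HasMixedAsymExp {m n : ℕ} (c C R : ℝ)
    (f : ((Fin m → ℂ) × (Fin n → ℂ)) → ℂ)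
    (a : (Fin m → ℝ) → (Fin n → ℕ) → ℂ) : Prop :=
  MixedNatural a ∧
  ∀ ν : ℝ, 0 < ν → ∃ c' C' R' : ℝ, 0 < c' ∧ 0 < C' ∧ 0 < R' ∧ R' ≤ R ∧
    SQD c' C' ⊆ SQD c C ∧
    ∃ F : Finset ((Fin m → ℝ) × (Fin n → ℕ)),
      (∀ p, p ∈ F ↔ a p.1 p.2 ≠ 0 ∧ (∑ i, p.1 i) + (∑ j, (p.2 j : ℝ)) ≤ ν) ∧
      ∀ ε : ℝ, 0 < ε → ∃ δ : ℝ, 0 < δ ∧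
        ∀ z ∈ QDom c' C' m, ∀ y ∈ PDisc R' n, mixedNorm z y < δ →
          ‖f (z, y) - ∑ p ∈ F, a p.1 p.2 * expMono p.1 z * ∏ j, (y j) ^ (p.2 j)‖
            ≤ ε * mixedNorm z y ^ ν

/-!
`∂f/∂yⱼ` is holomorphic because, locally, `fderiv f x v` is the Cauchy integral
`(2πi)⁻¹ ∮ f (x + w • v) / w² dw` over a small circle, which may be differentiated under the
integral sign: Cauchy's estimate bounds `fderiv f` uniformly near each point.

For the expansion, expand `f` to order `ν + 1` with partial sum `S` and apply the one-variable
Cauchy estimate to `w ↦ (f - S) (z, y + w eⱼ)` on a circle `|w| = ρ` with `ρ > ‖(E(z), y)‖`.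
On that circle `‖(E(z), y + w eⱼ)‖ ≤ 2ρ`, so `f - S = o(ρ^(ν+1))` there and
`∂(f - S)/∂yⱼ (z, y) = o(ρ^ν)`; letting `ρ → ‖(E(z), y)‖` gives the bound. Differentiating `S`
term by term yields the partial sum of `(βⱼ + 1) a(α, β + eⱼ)`, re-indexed along `β ↦ β + eⱼ`.
-/

open Metric Set Filter Topology Complex
open scoped Real

section Cauchy

variable {E : Type*} [NormedAddCommGroup E] [NormedSpace ℂ E] {g : E → ℂ}

lemma hasDerivAt_comp_add_smul {x v : E} {w : ℂ} (hg : DifferentiableAt ℂ g (x + w • v)) :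
    HasDerivAt (fun w : ℂ => g (x + w • v)) (fderiv ℂ g (x + w • v) v) w :=
  hg.hasFDerivAt.comp_hasDerivAt w
    (((hasDerivAt_id w).smul_const v).const_add x |>.congr_deriv (one_smul ℂ v))

lemma norm_fderiv_apply_le_of_forall_norm_eq {x v : E} {r M : ℝ} (hr : 0 < r)
    (hg : ∀ w : ℂ, ‖w‖ ≤ r → DifferentiableAt ℂ g (x + w • v))
    (hM : ∀ w : ℂ, ‖w‖ = r → ‖g (x + w • v)‖ ≤ M) :
    ‖fderiv ℂ g x v‖ ≤ M / r := by
  have hslice : DiffContOnCl ℂ (fun w : ℂ => g (x + w • v)) (ball 0 r) := by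
    refine DifferentiableOn.diffContOnCl fun w hw => ?_
    rw [closure_ball _ hr.ne', mem_closedBall_zero_iff] at hw
    exact (hasDerivAt_comp_add_smul (hg w hw)).differentiableAt.differentiableWithinAt
  have h0 := hasDerivAt_comp_add_smul (w := 0) (hg 0 (by simpa using hr.le))
  simp only [zero_smul, add_zero] at h0
  rw [← h0.deriv]
  exact norm_deriv_le_of_forall_mem_sphere_norm_le hr hslice fun w hw =>
    hM w (mem_sphere_zero_iff_norm.mp hw)

lemma norm_fderiv_le_of_forall_mem_closedBall {x : E} {r M : ℝ} (hr : 0 < r)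
    (hg : ∀ y ∈ closedBall x r, DifferentiableAt ℂ g y) (hM : ∀ y ∈ closedBall x r, ‖g y‖ ≤ M) :
    ‖fderiv ℂ g x‖ ≤ M / r := by
  have hM0 : 0 ≤ M := (norm_nonneg _).trans (hM x (mem_closedBall_self hr.le))
  refine ContinuousLinearMap.opNorm_le_bound _ (by positivity) fun u => ?_
  rcases eq_or_ne u 0 with rfl | hu
  · simp
  have hu' : 0 < ‖u‖ := norm_pos_iff.mpr hu
  have hmem : ∀ w : ℂ, ‖w‖ ≤ r / ‖u‖ → x + w • u ∈ closedBall x r := fun w hw => by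
    rw [mem_closedBall, dist_self_add_left, norm_smul]
    exact (le_div_iff₀ hu').mp hw
  calc ‖fderiv ℂ g x u‖ ≤ M / (r / ‖u‖) :=
        norm_fderiv_apply_le_of_forall_norm_eq (by positivity) (fun w hw => hg _ (hmem w hw))
          fun w hw => hM _ (hmem w hw.le)
    _ = M / r * ‖u‖ := by field_simp

lemma DifferentiableOn.exists_eventually_norm_fderiv_le [FiniteDimensional ℂ E] {S : Set E}
    (hS : IsOpen S) (hg : DifferentiableOn ℂ g S) {x : E} (hx : x ∈ S) :
    ∃ K, ∀ᶠ y in 𝓝 x, ‖fderiv ℂ g y‖ ≤ K := by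
  obtain ⟨ε, hε, hsub⟩ := nhds_basis_closedBall.mem_iff.1 (hS.mem_nhds hx)
  obtain ⟨M, hM⟩ := (isCompact_closedBall x ε).exists_bound_of_continuousOn
    (hg.continuousOn.mono hsub)
  have hnear : ∀ y ∈ ball x (ε / 2), closedBall y (ε / 2) ⊆ closedBall x ε := fun y hy =>
    closedBall_subset_closedBall' (by linarith [mem_ball.mp hy])
  refine ⟨M / (ε / 2), eventually_of_mem (ball_mem_nhds x (half_pos hε)) fun y hy => ?_⟩
  exact norm_fderiv_le_of_forall_mem_closedBall (half_pos hε)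
    (fun z hz => hg.differentiableAt (hS.mem_nhds (hsub (hnear y hy hz))))
    fun z hz => hM z (hnear y hy hz)

lemma fderiv_apply_eq_circleIntegral [CompleteSpace E] {x v : E} {ρ : ℝ} (hρ : 0 < ρ)
    (hg : ∀ w : ℂ, ‖w‖ < 2 * ρ → DifferentiableAt ℂ g (x + w • v)) :
    fderiv ℂ g x v = (2 * π * I : ℂ)⁻¹ • ∮ w in C(0, ρ), (w ^ 2)⁻¹ • g (x + w • v) := by
  have hslice : DifferentiableOn ℂ (fun w : ℂ => g (x + w • v)) (ball 0 (2 * ρ)) := fun w hw =>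
    (hasDerivAt_comp_add_smul (hg w (mem_ball_zero_iff.mp hw))).differentiableAt
      |>.differentiableWithinAt
  have h0 := hasDerivAt_comp_add_smul (w := 0) (hg 0 (by simpa using hρ))
  simp only [zero_smul, add_zero] at h0
  rw [← h0.deriv, ← two_pi_I_inv_smul_circleIntegral_sub_sq_inv_smul_of_differentiable
    isOpen_ball (closedBall_subset_ball (by linarith)) hslice (mem_ball_self hρ)]
  simp only [sub_zero]

lemma differentiableAt_circleIntegral_comp_add_smul [FiniteDimensional ℂ E] {x₀ v : E}
    {ρ K : ℝ} {s : Set E} (hρ : 0 < ρ) (hs : s ∈ 𝓝 x₀)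
    (hg : ∀ x ∈ s, ∀ w : ℂ, ‖w‖ = ρ → DifferentiableAt ℂ g (x + w • v))
    (hK : ∀ x ∈ s, ∀ w : ℂ, ‖w‖ = ρ → ‖fderiv ℂ g (x + w • v)‖ ≤ K) :
    DifferentiableAt ℂ (fun x => ∮ w in C(0, ρ), (w ^ 2)⁻¹ • g (x + w • v)) x₀ := by
  borelize E
  set γ := circleMap (0 : ℂ) ρ
  show DifferentiableAt ℂ
    (fun x => ∫ θ in 0..2 * π, deriv γ θ • (γ θ ^ 2)⁻¹ • g (x + γ θ • v)) x₀
  have hγ_norm : ∀ θ, ‖γ θ‖ = ρ := fun θ => by simp [γ, norm_circleMap_zero, abs_of_pos hρ]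
  have hγ'_norm : ∀ θ, ‖deriv γ θ‖ = ρ := fun θ => by
    simp [γ, deriv_circleMap, norm_circleMap_zero, abs_of_pos hρ]
  have hγ'_cont : Continuous (deriv γ) :=
    ((continuous_circleMap 0 ρ).mul continuous_const).congr fun θ => (deriv_circleMap 0 ρ θ).symm
  have hinv_cont : Continuous fun θ => (γ θ ^ 2)⁻¹ :=
    ((continuous_circleMap 0 ρ).pow 2).inv₀ fun θ =>
      pow_ne_zero 2 (norm_ne_zero_iff.mp (by rw [hγ_norm]; exact hρ.ne'))
  have hshift_cont : Continuous fun θ => γ θ • v :=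
    (continuous_circleMap 0 ρ).smul continuous_const
  have hg_cont : ∀ x ∈ s, Continuous fun θ => g (x + γ θ • v) := fun x hx =>
    continuous_iff_continuousAt.2 fun θ =>
      (hg x hx _ (hγ_norm θ)).continuousAt.comp (f := fun θ => x + γ θ • v)
        (continuous_const.add hshift_cont).continuousAt
  have hderiv : ∀ x ∈ s, ∀ θ, HasFDerivAt (fun x => deriv γ θ • (γ θ ^ 2)⁻¹ • g (x + γ θ • v))
      (deriv γ θ • (γ θ ^ 2)⁻¹ • fderiv ℂ g (x + γ θ • v)) x := fun x hx θ => by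
    have := (hg x hx _ (hγ_norm θ)).hasFDerivAt.comp x ((hasFDerivAt_id x).add_const (γ θ • v))
    rw [ContinuousLinearMap.comp_id] at this
    exact (this.const_smul ((γ θ ^ 2)⁻¹)).const_smul (deriv γ θ)
  refine (intervalIntegral.hasFDerivAt_integral_of_dominated_of_fderiv_le (bound := fun _ => K / ρ)
    (F' := fun x θ => deriv γ θ • (γ θ ^ 2)⁻¹ • fderiv ℂ g (x + γ θ • v))
    hs ?_ ?_ ?_ ?_ intervalIntegrable_const ?_).differentiableAt
  · filter_upwards [hs] with x hx
    exact (hγ'_cont.smul (hinv_cont.smul (hg_cont x hx))).aestronglyMeasurable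
  · exact (hγ'_cont.smul (hinv_cont.smul (hg_cont x₀ (mem_of_mem_nhds hs)))).intervalIntegrable _ _
  · exact (hγ'_cont.measurable.smul (hinv_cont.measurable.smul ((measurable_fderiv ℂ g).comp
      (measurable_const.add hshift_cont.measurable)))).aestronglyMeasurable
  · refine Eventually.of_forall fun θ _ x hx => ?_
    calc ‖deriv γ θ • (γ θ ^ 2)⁻¹ • fderiv ℂ g (x + γ θ • v)‖
        = ρ * ((ρ ^ 2)⁻¹ * ‖fderiv ℂ g (x + γ θ • v)‖) := by
          rw [norm_smul, norm_smul, hγ'_norm, norm_inv, norm_pow, hγ_norm]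
      _ ≤ ρ * ((ρ ^ 2)⁻¹ * K) := by gcongr; exact hK x hx _ (hγ_norm θ)
      _ = K / ρ := by field_simp
  · exact Eventually.of_forall fun θ _ x hx => hderiv x hx θ

lemma DifferentiableOn.differentiableAt_fderiv_apply [FiniteDimensional ℂ E] {S : Set E}
    (hS : IsOpen S) (hg : DifferentiableOn ℂ g S) (v : E) {x₀ : E} (hx₀ : x₀ ∈ S) :
    DifferentiableAt ℂ (fun x => fderiv ℂ g x v) x₀ := by
  obtain ⟨K, hK⟩ := hg.exists_eventually_norm_fderiv_le hS hx₀
  obtain ⟨ε, hε, hball⟩ := Metric.mem_nhds_iff.1 (hK.and (hS.mem_nhds hx₀))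
  set ρ := ε / (4 * (‖v‖ + 1))
  have hρ : 0 < ρ := by positivity
  have hnear : ∀ x ∈ ball x₀ (ε / 2), ∀ w : ℂ, ‖w‖ < 2 * ρ → x + w • v ∈ ball x₀ ε := by
    intro x hx w hw
    have hwv : ‖w‖ * ‖v‖ ≤ ε / 2 :=
      calc ‖w‖ * ‖v‖ ≤ 2 * ρ * (‖v‖ + 1) := by gcongr; linarith
        _ = ε / 2 := by simp only [ρ]; field_simp; ring
    rw [mem_ball] at hx ⊢
    refine (dist_triangle _ x _).trans_lt ?_
    rw [dist_self_add_left, norm_smul]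
    linarith
  have hdiff : ∀ x ∈ ball x₀ (ε / 2), ∀ w : ℂ, ‖w‖ < 2 * ρ →
      DifferentiableAt ℂ g (x + w • v) := fun x hx w hw =>
    hg.differentiableAt (hS.mem_nhds (hball (hnear x hx w hw)).2)
  have hsmall : ∀ w : ℂ, ‖w‖ = ρ → ‖w‖ < 2 * ρ := fun w hw => by linarith
  refine ((differentiableAt_circleIntegral_comp_add_smul hρ (ball_mem_nhds x₀ (half_pos hε))
    (fun x hx w hw => hdiff x hx w (hsmall w hw))
    (fun x hx w hw => (hball (hnear x hx w (hsmall w hw))).1)).const_smul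
    (2 * π * I : ℂ)⁻¹).congr_of_eventuallyEq ?_
  filter_upwards [ball_mem_nhds x₀ (half_pos hε)] with x hx
    using fderiv_apply_eq_circleIntegral hρ (hdiff x hx)

end Cauchy

lemma Fintype.prod_eq_mul_prod_compl_of_ne {ι M : Type*} [Fintype ι] [DecidableEq ι]
    [CommMonoid M] {f g : ι → M} (j : ι) (h : ∀ k, k ≠ j → f k = g k) :
    ∏ k, f k = f j * ∏ k ∈ {j}ᶜ, g k := by
  rw [Fintype.prod_eq_mul_prod_compl j]
  exact congrArg _ (Finset.prod_congr rfl fun k hk => h k (by simpa using hk))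

lemma Prod.mk_add_smul_mk_zero {𝕜 E F : Type*} [Semiring 𝕜] [AddCommMonoid E] [AddCommMonoid F]
    [Module 𝕜 E] [Module 𝕜 F] (x : E) (y v : F) (w : 𝕜) :
    (x, y) + w • ((0 : E), v) = (x, y + w • v) := by
  ext <;> simp

lemma le_mul_rpow_of_forall_lt {x K M δ ν : ℝ} (hMδ : M < δ) (hν : 0 ≤ ν)
    (h : ∀ ρ, M < ρ → ρ < δ → x ≤ K * ρ ^ ν) : x ≤ K * M ^ ν := by
  have hlim : Tendsto (fun ρ => K * ρ ^ ν) (𝓝[>] M) (𝓝 (K * M ^ ν)) :=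
    (continuousAt_const.mul (Real.continuousAt_rpow_const M ν (Or.inr hν))).tendsto.mono_left
      nhdsWithin_le_nhds
  refine ge_of_tendsto hlim ?_
  filter_upwards [Ioo_mem_nhdsGT hMδ] with ρ hρ using h ρ hρ.1 hρ.2

lemma isOpen_QDom (c C : ℝ) (m : ℕ) : IsOpen (QDom c C m) := by
  have hSQD : IsOpen (SQD c C) := isOpen_lt continuous_re (by fun_prop)
  simpa [QDom, Set.pi] using isOpen_set_pi (Set.finite_univ (α := Fin m)) fun _ _ => hSQD

lemma isOpen_PDisc (R : ℝ) (n : ℕ) : IsOpen (PDisc R n) := by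
  have hDisc : IsOpen (Disc R) := isOpen_lt continuous_norm continuous_const
  simpa [PDisc, Set.pi] using isOpen_set_pi (Set.finite_univ (α := Fin n)) fun _ _ => hDisc

section MixedSeries

variable {m n : ℕ}

lemma mixedNorm_eq_norm (z : Fin m → ℂ) (y : Fin n → ℂ) :
    mixedNorm z y = ‖(WithLp.toLp 2 (Sum.elim (fun i => (Real.exp (z i).re : ℂ)) y) :
      EuclideanSpace ℂ (Fin m ⊕ Fin n))‖ := by
  rw [mixedNorm, EuclideanSpace.norm_eq, Fintype.sum_sum_type]
  simp

lemma mixedNorm_add_smul_single_le (z : Fin m → ℂ) (y : Fin n → ℂ) (j : Fin n) (w : ℂ) :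
    mixedNorm z (y + w • Pi.single j 1) ≤ mixedNorm z y + ‖w‖ := by
  have hvec : (WithLp.toLp 2 (Sum.elim (fun i => (Real.exp (z i).re : ℂ))
        (y + w • Pi.single j 1)) : EuclideanSpace ℂ (Fin m ⊕ Fin n)) =
      WithLp.toLp 2 (Sum.elim (fun i => (Real.exp (z i).re : ℂ)) y) +
        w • EuclideanSpace.single (Sum.inr j) 1 := by
    ext (i | k) <;> simp [Pi.single_apply]
  rw [mixedNorm_eq_norm, mixedNorm_eq_norm, hvec]
  refine (norm_add_le _ _).trans_eq ?_
  simp [norm_smul]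

lemma add_smul_single_mem_PDisc {r s : ℝ} {y : Fin n → ℂ} (hy : y ∈ PDisc r n) (j : Fin n)
    {w : ℂ} (hw : ‖w‖ ≤ s) : y + w • Pi.single j 1 ∈ PDisc (r + s) n := fun k => by
  have hyk : ‖y k‖ < r := hy k
  show ‖(y + w • Pi.single j 1 : Fin n → ℂ) k‖ < r + s
  rcases eq_or_ne k j with rfl | hk
  · simpa using (norm_add_le (y k) w).trans_lt (by linarith)
  · simpa [Pi.single_eq_of_ne hk] using hyk.trans_le (by linarith [norm_nonneg w])

lemma norm_fderiv_apply_single_le {g : (Fin m → ℂ) × (Fin n → ℂ) → ℂ} {z : Fin m → ℂ}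
    {y : Fin n → ℂ} {j : Fin n} {ρ K ν : ℝ} (hρ : 0 < ρ) (hK : 0 ≤ K) (hν : 0 ≤ ν)
    (hzy : mixedNorm z y ≤ ρ)
    (hg : ∀ w : ℂ, ‖w‖ ≤ ρ → DifferentiableAt ℂ g (z, y + w • Pi.single j 1))
    (hbound : ∀ w : ℂ, ‖w‖ = ρ → ‖g (z, y + w • Pi.single j 1)‖ ≤
      K * mixedNorm z (y + w • Pi.single j 1) ^ (ν + 1)) :
    ‖fderiv ℂ g (z, y) (0, Pi.single j 1)‖ ≤ K * 2 ^ (ν + 1) * ρ ^ ν := by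
  have hcircle : ∀ w : ℂ, ‖w‖ = ρ → ‖g ((z, y) + w • ((0 : Fin m → ℂ), Pi.single j 1))‖ ≤
      K * (2 * ρ) ^ (ν + 1) := fun w hw => by
    rw [Prod.mk_add_smul_mk_zero]
    refine (hbound w hw).trans (mul_le_mul_of_nonneg_left (Real.rpow_le_rpow
      (Real.sqrt_nonneg _) ?_ (by linarith)) hK)
    linarith [mixedNorm_add_smul_single_le z y j w]
  calc ‖fderiv ℂ g (z, y) (0, Pi.single j 1)‖ ≤ K * (2 * ρ) ^ (ν + 1) / ρ :=
        norm_fderiv_apply_le_of_forall_norm_eq hρ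
          (fun w hw => by rw [Prod.mk_add_smul_mk_zero]; exact hg w hw) hcircle
    _ = K * 2 ^ (ν + 1) * ρ ^ ν := by
        rw [Real.mul_rpow zero_le_two hρ.le, Real.rpow_add_one hρ.ne']
        field_simp

def derivCoeff (j : Fin n) (a : (Fin m → ℝ) → (Fin n → ℕ) → ℂ) :
    (Fin m → ℝ) → (Fin n → ℕ) → ℂ :=
  fun α β => ((β j + 1 : ℕ) : ℂ) * a α (β + Pi.single j 1)

lemma derivCoeff_ne_zero_iff {j : Fin n} {a : (Fin m → ℝ) → (Fin n → ℕ) → ℂ}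
    {α : Fin m → ℝ} {β : Fin n → ℕ} : derivCoeff j a α β ≠ 0 ↔ a α (β + Pi.single j 1) ≠ 0 := by
  simp [derivCoeff, Nat.cast_add_one_ne_zero]

lemma MixedNatural.derivCoeff {a : (Fin m → ℝ) → (Fin n → ℕ) → ℂ} (ha : MixedNatural a)
    (j : Fin n) : MixedNatural (derivCoeff j a) := by
  refine ⟨fun α β h => ha.1 α _ (derivCoeff_ne_zero_iff.1 h), fun i r hr => ?_⟩
  refine (ha.2 i r hr).subset ?_
  rintro s ⟨⟨α, β, h, rfl⟩, hs⟩
  exact ⟨⟨α, _, derivCoeff_ne_zero_iff.1 h, rfl⟩, hs⟩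

def raiseExp (j : Fin n) (p : (Fin m → ℝ) × (Fin n → ℕ)) : (Fin m → ℝ) × (Fin n → ℕ) :=
  (p.1, p.2 + Pi.single j 1)

lemma raiseExp_injective (j : Fin n) : Function.Injective (raiseExp (m := m) j) :=
  Function.Injective.prodMap Function.injective_id (add_left_injective _)

lemma mem_preimage_raiseExp_iff {j : Fin n} {a : (Fin m → ℝ) → (Fin n → ℕ) → ℂ}
    {F : Finset ((Fin m → ℝ) × (Fin n → ℕ))} {ν : ℝ}
    (hF : ∀ p, p ∈ F ↔ a p.1 p.2 ≠ 0 ∧ (∑ i, p.1 i) + (∑ k, (p.2 k : ℝ)) ≤ ν + 1)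
    (p : (Fin m → ℝ) × (Fin n → ℕ)) :
    p ∈ F.preimage (raiseExp j) (raiseExp_injective j).injOn ↔
      derivCoeff j a p.1 p.2 ≠ 0 ∧ (∑ i, p.1 i) + (∑ k, (p.2 k : ℝ)) ≤ ν := by
  have hsum : ∑ k, (((p.2 + Pi.single j 1 : Fin n → ℕ) k : ℕ) : ℝ) = ∑ k, (p.2 k : ℝ) + 1 := by
    simp [Finset.sum_add_distrib, Pi.single_apply]
  rw [Finset.mem_preimage, hF, derivCoeff_ne_zero_iff]
  simp only [raiseExp, hsum]
  constructor <;> rintro ⟨h, hle⟩ <;> exact ⟨h, by linarith⟩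

def mixedPartialSum (a : (Fin m → ℝ) → (Fin n → ℕ) → ℂ) (F : Finset ((Fin m → ℝ) × (Fin n → ℕ)))
    (p : (Fin m → ℂ) × (Fin n → ℂ)) : ℂ :=
  ∑ q ∈ F, a q.1 q.2 * expMono q.1 p.1 * ∏ k, p.2 k ^ q.2 k

lemma differentiable_mixedPartialSum (a : (Fin m → ℝ) → (Fin n → ℕ) → ℂ)
    (F : Finset ((Fin m → ℝ) × (Fin n → ℕ))) : Differentiable ℂ (mixedPartialSum a F) := by
  unfold mixedPartialSum expMono
  fun_prop

lemma hasDerivAt_prod_pow_add_smul_single (y : Fin n → ℂ) (j : Fin n) (β : Fin n → ℕ) :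
    HasDerivAt (fun w : ℂ => ∏ k, (y + w • Pi.single j 1 : Fin n → ℂ) k ^ β k)
      (β j * ∏ k, y k ^ (β - Pi.single j 1 : Fin n → ℕ) k) 0 := by
  set P := ∏ k ∈ {j}ᶜ, y k ^ β k
  have hslice : (fun w : ℂ => ∏ k, (y + w • Pi.single j 1 : Fin n → ℂ) k ^ β k) =
      fun w => (y j + w) ^ β j * P := funext fun w => by
    rw [Fintype.prod_eq_mul_prod_compl_of_ne (g := fun k => y k ^ β k) j
      fun k hk => by simp [Pi.single_eq_of_ne hk]]
    simp [P]
  have hval : ∏ k, y k ^ (β - Pi.single j 1 : Fin n → ℕ) k = y j ^ (β j - 1) * P := by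
    rw [Fintype.prod_eq_mul_prod_compl_of_ne (g := fun k => y k ^ β k) j
      fun k hk => by simp [Pi.single_eq_of_ne hk]]
    simp [P]
  rw [hslice, hval, ← mul_assoc]
  simpa using (((hasDerivAt_id (0 : ℂ)).const_add (y j)).pow (β j)).mul_const P

lemma hasDerivAt_mixedPartialSum_add_smul_single (a : (Fin m → ℝ) → (Fin n → ℕ) → ℂ)
    (F : Finset ((Fin m → ℝ) × (Fin n → ℕ))) (z : Fin m → ℂ) (y : Fin n → ℂ) (j : Fin n) :
    HasDerivAt (fun w : ℂ => mixedPartialSum a F (z, y + w • Pi.single j 1))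
      (mixedPartialSum (derivCoeff j a)
        (F.preimage (raiseExp j) (raiseExp_injective j).injOn) (z, y)) 0 := by
  have hterm := fun q : (Fin m → ℝ) × (Fin n → ℕ) =>
    (hasDerivAt_prod_pow_add_smul_single y j q.2).const_mul (a q.1 q.2 * expMono q.1 z)
  refine (HasDerivAt.fun_sum fun q (_ : q ∈ F) => hterm q).congr_deriv ?_
  unfold mixedPartialSum
  rw [← Finset.sum_preimage _ _ (raiseExp_injective j).injOn]
  · refine Finset.sum_congr rfl fun q _ => ?_
    simp only [derivCoeff, raiseExp, add_tsub_cancel_right, Pi.add_apply, Pi.single_eq_same]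
    push_cast
    ring
  · intro q _ hq
    suffices q.2 j = 0 by simp [this]
    by_contra hqj
    refine hq ⟨(q.1, q.2 - Pi.single j 1), Prod.ext rfl (tsub_add_cancel_of_le fun k => ?_)⟩
    rcases eq_or_ne k j with rfl | hk
    · simpa [Nat.one_le_iff_ne_zero] using hqj
    · simp [Pi.single_eq_of_ne hk]

lemma fderiv_mixedPartialSum_apply_single (a : (Fin m → ℝ) → (Fin n → ℕ) → ℂ)
    (F : Finset ((Fin m → ℝ) × (Fin n → ℕ))) (z : Fin m → ℂ) (y : Fin n → ℂ) (j : Fin n) :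
    fderiv ℂ (mixedPartialSum a F) (z, y) (0, Pi.single j 1) =
      mixedPartialSum (derivCoeff j a)
        (F.preimage (raiseExp j) (raiseExp_injective j).injOn) (z, y) := by
  have h := hasDerivAt_comp_add_smul (x := (z, y)) (v := ((0 : Fin m → ℂ), Pi.single j 1))
    (w := 0) (differentiable_mixedPartialSum a F _)
  simp only [Prod.mk_add_smul_mk_zero, zero_smul, add_zero] at h
  exact h.unique (hasDerivAt_mixedPartialSum_add_smul_single a F z y j)

theorem HasMixedAsymExp.fderiv_apply_single {c C R : ℝ}
    {f : (Fin m → ℂ) × (Fin n → ℂ) → ℂ} {a : (Fin m → ℝ) → (Fin n → ℕ) → ℂ}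
    (hf : DifferentiableOn ℂ f (QDom c C m ×ˢ PDisc R n)) (ha : HasMixedAsymExp c C R f a)
    (j : Fin n) :
    HasMixedAsymExp c C R (fun p => fderiv ℂ f p (0, Pi.single j 1)) (derivCoeff j a) := by
  obtain ⟨ha_nat, ha_exp⟩ := ha
  refine ⟨ha_nat.derivCoeff j, fun ν hν => ?_⟩
  obtain ⟨c', C', R', hc', hC', hR', hR'R, hsub, F, hF, hest⟩ := ha_exp (ν + 1) (by linarith)
  refine ⟨c', C', R' / 2, hc', hC', by positivity, by linarith, hsub, _,
    mem_preimage_raiseExp_iff hF, fun ε hε => ?_⟩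
  obtain ⟨δ, hδ, hB⟩ := hest (ε / 2 ^ (ν + 1)) (by positivity)
  refine ⟨min (δ / 2) (R' / 2), by positivity, fun z hz y hy hzy => ?_⟩
  have hy' : ∀ w : ℂ, ‖w‖ ≤ R' / 2 → y + w • Pi.single j 1 ∈ PDisc R' n := fun w hw => by
    simpa using add_smul_single_mem_PDisc hy j hw
  have hf' : ∀ w : ℂ, ‖w‖ ≤ R' / 2 → DifferentiableAt ℂ f (z, y + w • Pi.single j 1) :=
    fun w hw => hf.differentiableAt (((isOpen_QDom c C m).prod (isOpen_PDisc R n)).mem_nhds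
      ⟨fun i => hsub (hz i), fun k => (hy' w hw k).trans_le hR'R⟩)
  have hf₀ : DifferentiableAt ℂ f (z, y) := by simpa using hf' 0 (by rw [norm_zero]; positivity)
  show ‖fderiv ℂ f (z, y) (0, Pi.single j 1) -
      mixedPartialSum (derivCoeff j a) (F.preimage (raiseExp j) _) (z, y)‖ ≤ ε * mixedNorm z y ^ ν
  rw [← fderiv_mixedPartialSum_apply_single, ← sub_apply,
    ← fderiv_sub hf₀ (differentiable_mixedPartialSum a F _)]
  refine le_mul_rpow_of_forall_lt hzy hν.le fun ρ hρ hρδ => ?_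
  have hρ₀ : 0 < ρ := (Real.sqrt_nonneg _).trans_lt hρ
  have hρδ' : ρ < δ / 2 := hρδ.trans_le (min_le_left _ _)
  have hρR : ρ < R' / 2 := hρδ.trans_le (min_le_right _ _)
  calc _ ≤ ε / 2 ^ (ν + 1) * 2 ^ (ν + 1) * ρ ^ ν := by
        refine norm_fderiv_apply_single_le hρ₀ (by positivity) (by linarith) hρ.le
          (fun w hw => (hf' w (by linarith)).sub (differentiable_mixedPartialSum a F _))
          fun w hw => hB z hz _ (hy' w (by linarith)) ?_
        linarith [mixedNorm_add_smul_single_le z y j w]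
    _ = ε * ρ ^ ν := by field_simp

end MixedSeries

theorem stmt6_general (m n : ℕ) (c C R : ℝ)
    (f : ((Fin m → ℂ) × (Fin n → ℂ)) → ℂ)
    (hf : DifferentiableOn ℂ f ((QDom c C m) ×ˢ (PDisc R n)))
    (a : (Fin m → ℝ) → (Fin n → ℕ) → ℂ) (ha : HasMixedAsymExp c C R f a) (j : Fin n) :
    DifferentiableOn ℂ (fun p => fderiv ℂ f p (0, Pi.single j 1))
      ((QDom c C m) ×ˢ (PDisc R n)) ∧
    HasMixedAsymExp c C R (fun p => fderiv ℂ f p (0, Pi.single j 1))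
      (fun α β => ((β j + 1 : ℕ) : ℂ) * a α (β + Pi.single j 1)) :=
  ⟨fun _ hp => (hf.differentiableAt_fderiv_apply ((isOpen_QDom c C m).prod (isOpen_PDisc R n))
    _ hp).differentiableWithinAt, ha.fderiv_apply_single hf j⟩

/-- If `f` is holomorphic on `Ω(c,C)^m × D_R^n` with mixed asymptotic
expansion `a`, then `∂f/∂yⱼ` is holomorphic there with mixed asymptotic expansion
`(α,β) ↦ (βⱼ+1)·a(α,β+eⱼ)`. -/
theorem stmt6 (m n : ℕ) (c C R : ℝ) (hc : 0 < c) (hC : 0 < C) (hR : 0 < R)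
    (f : ((Fin m → ℂ) × (Fin n → ℂ)) → ℂ)
    (hf : DifferentiableOn ℂ f ((QDom c C m) ×ˢ (PDisc R n)))
    (a : (Fin m → ℝ) → (Fin n → ℕ) → ℂ) (ha : HasMixedAsymExp c C R f a) (j : Fin n) :
    DifferentiableOn ℂ (fun p => fderiv ℂ f p (0, Pi.single j 1))
      ((QDom c C m) ×ˢ (PDisc R n)) ∧
    HasMixedAsymExp c C R (fun p => fderiv ℂ f p (0, Pi.single j 1))
      (fun α β => ((β j + 1 : ℕ) : ℂ) * a α (β + Pi.single j 1)) :=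
  stmt6_general m n c C R f hf a ha j
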